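/- For every d ≥ 1, there exists a faceshare-free periodic cube tiling of ℝ^d if and only if the Keller graph G_{d,s} with s = 2^{d−1} contains a clique of size 2^d. -/

import Mathlib

/-- The half-open unit cube `[x_1, x_1+1) × ⋯ × [x_d, x_d+1)` with corner `x`. -/
def cube (d : ℕ) (x : Fin d → ℝ) : Set (Fin d → ℝ) :=
  {y | ∀ i, x i ≤ y i ∧ y i < x i + 1}

/-- `T` is a cube tiling of `ℝ^d`: the cubes with corners in `T` are pairwise
disjoint and their union is all of `ℝ^d`. -/
def IsTiling (d : ℕ) (T : Set (Fin d → ℝ)) : Prop :=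
  (T.Pairwise fun t t' => Disjoint (cube d t) (cube d t')) ∧
  (⋃ t ∈ T, cube d t) = Set.univ

/-- The `i`-th standard basis vector of `ℝ^d`. -/
def stdBasis (d : ℕ) (i : Fin d) : Fin d → ℝ := fun j => if j = i then 1 else 0

/-- Two cubes (given by their corners `x`, `y`) faceshare if `y = x ± e_i`
for some standard basis vector `e_i`. -/
def Faceshare (d : ℕ) (x y : Fin d → ℝ) : Prop :=
  ∃ i : Fin d, y = x + stdBasis d i ∨ y = x - stdBasis d i

/-- A tiling is faceshare-free if no two distinct cubes of it faceshare. -/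
def FaceshareFree (d : ℕ) (T : Set (Fin d → ℝ)) : Prop :=
  ∀ t ∈ T, ∀ t' ∈ T, t ≠ t' → ¬ Faceshare d t t'

/-- A tiling `T` is periodic if `t + 2z ∈ T` for every `t ∈ T` and `z ∈ ℤ^d`. -/
def PeriodicTiling (d : ℕ) (T : Set (Fin d → ℝ)) : Prop :=
  ∀ t ∈ T, ∀ z : Fin d → ℤ, (fun j => t j + 2 * (z j : ℝ)) ∈ T

/-- A tiling is `s`-discrete if for each coordinate `i`, the values `t i` modulo 1
over `t ∈ T` take at most `s` distinct values. -/
def SDiscrete (d s : ℕ) (T : Set (Fin d → ℝ)) : Prop :=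
  ∀ i : Fin d, ∃ S : Finset ℝ, S.card ≤ s ∧ ∀ t ∈ T, Int.fract (t i) ∈ S

/-- The Keller graph `G_{n,s}`: vertices are `n`-tuples with entries in `{0,…,2s-1}`,
two vertices adjacent iff they differ by exactly `s` in at least one coordinate
and differ in at least two coordinates. -/
def kellerGraph (n s : ℕ) : SimpleGraph (Fin n → Fin (2 * s)) where
  Adj x y :=
    (∃ i, (x i : ℕ) + s = (y i : ℕ) ∨ (y i : ℕ) + s = (x i : ℕ)) ∧
    (∃ i j, i ≠ j ∧ x i ≠ y i ∧ x j ≠ y j)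
  symm := by
    constructor
    rintro x y ⟨⟨i, h⟩, j, k, hjk, hj, hk⟩
    exact ⟨⟨i, Or.symm h⟩, j, k, hjk, hj.symm, hk.symm⟩
  loopless := by
    constructor
    rintro x ⟨-, j, k, hjk, hj, hk⟩
    exact hj rfl

/-!
In a `2ℤ^d`-periodic cube tiling, two corners that are not congruent modulo `2ℤ^d` differ by an
odd integer in some coordinate. Hence the corners in `[0,2)^d` are `2^d` in number, any two differ
by exactly `1` somewhere, and, if the tiling is faceshare-free, in at least two coordinates. In each
coordinate their fractional parts pair up, so take at most `2^(d-1)` values; coding a coordinate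
`x` by the index of its fractional part plus `s` times the bit `1 ≤ x` turns them into a clique.

Conversely, a clique `K` gives the tiling by the cubes with corners in `v / s + 2ℤ^d`, `v ∈ K`:
the coordinate where two vertices differ by `s` makes their corners differ by an odd integer, the
`2^d` distinct parity patterns of `⌊y - v / s⌋` show that every point `y` is covered, and a
faceshare would produce two vertices differing in a single coordinate.
-/

open Set

section Cube

variable {d : ℕ}

lemma disjoint_cube_iff {x y : Fin d → ℝ} :
    Disjoint (cube d x) (cube d y) ↔ ∃ i, 1 ≤ |x i - y i| := by
  constructor
  · intro h
    by_contra! hlt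
    refine Set.not_disjoint_iff.2 ⟨fun i => max (x i) (y i), fun i => ⟨le_max_left _ _, ?_⟩,
      fun i => ⟨le_max_right _ _, ?_⟩⟩ h <;>
    · obtain ⟨h1, h2⟩ := abs_lt.1 (hlt i)
      exact max_lt (by linarith) (by linarith)
  · rintro ⟨i, hi⟩
    refine Set.disjoint_left.2 fun p hx hy => ?_
    obtain ⟨hx1, hx2⟩ := hx i
    obtain ⟨hy1, hy2⟩ := hy i
    rcases le_abs'.1 hi with h | h <;> linarith

lemma disjoint_cube_of_sub_eq_intCast {x y : Fin d → ℝ} (i : Fin d) {k : ℤ} (hk : k ≠ 0)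
    (h : x i - y i = k) : Disjoint (cube d x) (cube d y) :=
  disjoint_cube_iff.2 ⟨i, by rw [h, ← Int.cast_abs]; exact_mod_cast Int.one_le_abs hk⟩

end Cube

namespace IsTiling

variable {d : ℕ} {T : Set (Fin d → ℝ)}

lemma exists_mem_cube (hT : IsTiling d T) (p : Fin d → ℝ) : ∃ u ∈ T, p ∈ cube d u := by
  simpa using (hT.2.symm ▸ Set.mem_univ p : p ∈ ⋃ t ∈ T, cube d t)

lemma eq_of_forall_abs_sub_lt (hT : IsTiling d T) {t t' : Fin d → ℝ} (ht : t ∈ T)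
    (ht' : t' ∈ T) (h : ∀ i, |t i - t' i| < 1) : t = t' := by
  by_contra hne
  obtain ⟨i, hi⟩ := disjoint_cube_iff.1 (hT.1 ht ht' hne)
  exact (h i).not_ge hi

lemma exists_mem_apply_eq_add_one (hT : IsTiling d T) {t : Fin d → ℝ} (ht : t ∈ T)
    (i : Fin d) : ∃ u ∈ T, u i = t i + 1 := by
  obtain ⟨u, hu, hp⟩ := hT.exists_mem_cube fun j => if j = i then t i + 1 else t j + 1 / 2
  refine ⟨u, hu, ?_⟩
  have hut : u ≠ t := by
    rintro rfl
    simpa using (hp i).2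
  obtain ⟨k, hk⟩ := disjoint_cube_iff.1 (hT.1 hu ht hut)
  obtain rfl : k = i := by
    by_contra hki
    obtain ⟨h1, h2⟩ := hp k
    simp only [hki, if_false] at h1 h2
    exact hk.not_gt (abs_lt.2 ⟨by linarith, by linarith⟩)
  obtain ⟨h1, h2⟩ := hp k
  simp only [if_true] at h1 h2
  rcases le_abs'.1 hk with h | h <;> linarith

end IsTiling

lemma int_eq_zero_of_add_two_mul_mem_Ico {x : ℝ} {k : ℤ} (hx : x ∈ Ico (0 : ℝ) 2)
    (hxk : x + 2 * k ∈ Ico (0 : ℝ) 2) : k = 0 := by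
  have h1 : (-1 : ℝ) < k := by linarith [hx.2, hxk.1]
  have h2 : (k : ℝ) < 1 := by linarith [hx.1, hxk.2]
  have : -1 < k ∧ k < 1 := ⟨by exact_mod_cast h1, by exact_mod_cast h2⟩
  omega

lemma abs_sub_ne_one_of_mem_Ico_add_two_mul {a x y : ℝ} {m n : ℤ}
    (hx : x ∈ Ico (a + 2 * m) (a + 2 * m + 1)) (hy : y ∈ Ico (a + 2 * n) (a + 2 * n + 1)) :
    |x - y| ≠ 1 := by
  obtain ⟨hx1, hx2⟩ := hx
  obtain ⟨hy1, hy2⟩ := hy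
  intro h
  rcases abs_eq (zero_le_one' ℝ) |>.1 h with h | h
  · have : (0 : ℝ) < m - n ∧ (m : ℝ) - n < 1 := ⟨by linarith, by linarith⟩
    have : 0 < m - n ∧ m - n < 1 := ⟨by exact_mod_cast this.1, by exact_mod_cast this.2⟩
    omega
  · have : (-1 : ℝ) < m - n ∧ (m : ℝ) - n < 0 := ⟨by linarith, by linarith⟩
    have : -1 < m - n ∧ m - n < 0 := ⟨by exact_mod_cast this.1, by exact_mod_cast this.2⟩
    omega

def baseCorners (d : ℕ) (T : Set (Fin d → ℝ)) : Set (Fin d → ℝ) :=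
  {t ∈ T | ∀ i, t i ∈ Ico (0 : ℝ) 2}

namespace PeriodicTiling

variable {d : ℕ} {T : Set (Fin d → ℝ)}

/-- Otherwise the translate of `t` by the even vector nearest to `t' - t` would overlap `t'`. -/
lemma exists_sub_eq_odd (hT : IsTiling d T) (hP : PeriodicTiling d T) {t t' : Fin d → ℝ}
    (ht : t ∈ T) (ht' : t' ∈ T)
    (hcong : ¬ ∃ z : Fin d → ℤ, t' = fun j => t j + 2 * (z j : ℝ)) :
    ∃ i, ∃ k : ℤ, t' i - t i = 2 * k + 1 := by
  by_contra! hodd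
  refine hcong ⟨fun j => ⌊(t' j - t j + 1) / 2⌋,
    (hT.eq_of_forall_abs_sub_lt (hP t ht _) ht' fun j => abs_lt.2 ⟨?_, ?_⟩).symm⟩
  all_goals
    have h1 := Int.floor_le ((t' j - t j + 1) / 2)
    have h2 := Int.lt_floor_add_one ((t' j - t j + 1) / 2)
  · linarith
  · refine lt_of_le_of_ne (by linarith) fun heq => hodd j (⌊(t' j - t j + 1) / 2⌋ - 1) ?_
    push_cast
    linarith

lemma exists_add_two_mul_mem_baseCorners (hP : PeriodicTiling d T) {u : Fin d → ℝ}
    (hu : u ∈ T) :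
    ∃ z : Fin d → ℤ, (fun j => u j + 2 * (z j : ℝ)) ∈ baseCorners d T := by
  refine ⟨fun j => -⌊u j / 2⌋, hP u hu _, fun j => ⟨?_, ?_⟩⟩ <;>
  · have h1 := Int.floor_le (u j / 2)
    have h2 := Int.lt_floor_add_one (u j / 2)
    push_cast
    linarith

lemma exists_eq_add_one_of_mem_baseCorners (hT : IsTiling d T) (hP : PeriodicTiling d T)
    {t t' : Fin d → ℝ} (ht : t ∈ baseCorners d T) (ht' : t' ∈ baseCorners d T)
    (hne : t ≠ t') : ∃ i, t' i = t i + 1 ∨ t i = t' i + 1 := by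
  have hcong : ¬ ∃ z : Fin d → ℤ, t' = fun j => t j + 2 * (z j : ℝ) := by
    rintro ⟨z, rfl⟩
    refine hne (funext fun j => ?_)
    simp [int_eq_zero_of_add_two_mul_mem_Ico (ht.2 j) (ht'.2 j)]
  obtain ⟨i, k, hk⟩ := exists_sub_eq_odd hT hP ht.1 ht'.1 hcong
  obtain ⟨h0, h2⟩ := ht.2 i
  obtain ⟨h0', h2'⟩ := ht'.2 i
  have hlo : (-2 : ℝ) < k := by linarith
  have hhi : (k : ℝ) < 1 := by linarith
  have : -2 < k ∧ k < 1 := ⟨by exact_mod_cast hlo, by exact_mod_cast hhi⟩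
  obtain rfl | rfl : k = 0 ∨ k = -1 := by omega
  · exact ⟨i, Or.inl (by push_cast at hk; linarith)⟩
  · exact ⟨i, Or.inr (by push_cast at hk; linarith)⟩

lemma exists_two_ne_of_mem_baseCorners (hT : IsTiling d T) (hFF : FaceshareFree d T)
    (hP : PeriodicTiling d T) {t t' : Fin d → ℝ} (ht : t ∈ baseCorners d T)
    (ht' : t' ∈ baseCorners d T) (hne : t ≠ t') :
    ∃ i j, i ≠ j ∧ t i ≠ t' i ∧ t j ≠ t' j := by
  obtain ⟨i, hi⟩ := exists_eq_add_one_of_mem_baseCorners hT hP ht ht' hne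
  by_contra! heq
  have hoff : ∀ j, j ≠ i → t' j = t j := fun j hji =>
    (heq i j (Ne.symm hji) (by rcases hi with h | h <;> rw [h] <;> simp)).symm
  refine hFF t ht.1 t' ht'.1 hne ⟨i, ?_⟩
  rcases hi with h | h <;> [left; right] <;>
  · funext j
    by_cases hji : j = i
    · subst hji
      simp [stdBasis, h]
    · simp [stdBasis, hji, hoff j hji]

lemma injOn_decide_one_le_baseCorners (hT : IsTiling d T) (hP : PeriodicTiling d T) :
    InjOn (fun t i => decide (1 ≤ t i)) (baseCorners d T) := by
  intro t ht t' ht' heq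
  by_contra hne
  obtain ⟨i, hi⟩ := exists_eq_add_one_of_mem_baseCorners hT hP ht ht' hne
  have := congrFun heq i
  simp only [decide_eq_decide] at this
  obtain ⟨h0, h2⟩ := ht.2 i
  obtain ⟨h0', h2'⟩ := ht'.2 i
  rcases hi with h | h
  · exact absurd (this.2 (by linarith)) (by linarith)
  · exact absurd (this.1 (by linarith)) (by linarith)

lemma finite_baseCorners (hT : IsTiling d T) (hP : PeriodicTiling d T) :
    (baseCorners d T).Finite :=
  Finite.of_injOn (mapsTo_univ _ _) (injOn_decide_one_le_baseCorners hT hP) finite_univ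

/-- The vertices `ε ∈ {0,1}^d` of the unit cube lie in cubes whose corners are pairwise
incongruent modulo `2ℤ^d`. -/
lemma two_pow_le_ncard_baseCorners (hT : IsTiling d T) (hP : PeriodicTiling d T) :
    2 ^ d ≤ (baseCorners d T).ncard := by
  have hvertex (ε : Fin d → Bool) : ∃ t ∈ baseCorners d T, ∃ z : Fin d → ℤ,
      ∀ i, (if ε i then (1 : ℝ) else 0) ∈ Ico (t i + 2 * z i) (t i + 2 * z i + 1) := by
    obtain ⟨u, hu, hεu⟩ := hT.exists_mem_cube fun i => if ε i then (1 : ℝ) else 0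
    obtain ⟨z, hz⟩ := hP.exists_add_two_mul_mem_baseCorners hu
    refine ⟨_, hz, -z, fun i => ?_⟩
    simpa using hεu i
  choose ψ hψ z hz using hvertex
  have hinj : InjOn ψ univ := by
    intro ε _ δ _ heq
    by_contra hne
    obtain ⟨i, hi⟩ := Function.ne_iff.1 hne
    have hε := hz ε i
    have hδ := hz δ i
    rw [heq] at hε
    refine abs_sub_ne_one_of_mem_Ico_add_two_mul hε hδ ?_
    revert hi
    generalize ε i = b
    generalize δ i = b'
    cases b <;> cases b' <;> norm_num
  simpa [Nat.card_fun] using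
    ncard_le_ncard_of_injOn ψ (fun ε _ => hψ ε) hinj (finite_baseCorners hT hP)

lemma ncard_baseCorners (hT : IsTiling d T) (hP : PeriodicTiling d T) :
    (baseCorners d T).ncard = 2 ^ d := by
  refine le_antisymm ?_ (two_pow_le_ncard_baseCorners hT hP)
  simpa [Nat.card_fun] using
    ncard_le_ncard_of_injOn _ (fun _ _ => mem_univ _) (injOn_decide_one_le_baseCorners hT hP)
      finite_univ

lemma exists_ne_mem_baseCorners_fract_eq (hT : IsTiling d T) (hP : PeriodicTiling d T)
    {t : Fin d → ℝ} (ht : t ∈ baseCorners d T) (i : Fin d) :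
    ∃ t' ∈ baseCorners d T, t' ≠ t ∧ Int.fract (t' i) = Int.fract (t i) := by
  obtain ⟨u, hu, hui⟩ := hT.exists_mem_apply_eq_add_one ht.1 i
  obtain ⟨z, hz⟩ := hP.exists_add_two_mul_mem_baseCorners hu
  have hi : u i + 2 * (z i : ℝ) = t i + ((2 * z i + 1 : ℤ) : ℝ) := by
    push_cast
    linarith
  refine ⟨_, hz, fun heq => ?_, by simp only [hi, Int.fract_add_intCast]⟩
  have hodd : ((2 * z i + 1 : ℤ) : ℝ) = 0 := by linarith [congrFun heq i]
  have : 2 * z i + 1 = 0 := by exact_mod_cast hodd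
  omega

/-- The `2^d` corners in `[0,2)^d` that share a fractional part in a given coordinate come at
least in pairs. -/
lemma sDiscrete (hT : IsTiling d T) (hP : PeriodicTiling d T) :
    SDiscrete d (2 ^ (d - 1)) T := by
  classical
  intro i
  set R := (hP.finite_baseCorners hT).toFinset
  refine ⟨R.image fun t => Int.fract (t i), ?_, fun t ht => ?_⟩
  · have hpair : 2 * (R.image fun t => Int.fract (t i)).card ≤ R.card := by
      refine Finset.mul_card_image_le_card R 2 fun c hc => ?_
      obtain ⟨t, htR, rfl⟩ := Finset.mem_image.1 hc
      have ht := (hP.finite_baseCorners hT).mem_toFinset.1 htR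
      obtain ⟨t', ht', hne, hfr⟩ := exists_ne_mem_baseCorners_fract_eq hT hP ht i
      refine Finset.one_lt_card.2 ⟨t', ?_, t, ?_, hne⟩ <;> simp [R, ht, ht', hfr]
    have hR : R.card = 2 * 2 ^ (d - 1) := by
      rw [← ncard_eq_toFinset_card _ (hP.finite_baseCorners hT), hP.ncard_baseCorners hT,
        ← pow_succ', Nat.sub_add_cancel i.pos]
    omega
  · obtain ⟨z, hz⟩ := hP.exists_add_two_mul_mem_baseCorners ht
    refine Finset.mem_image.2 ⟨_, (hP.finite_baseCorners hT).mem_toFinset.2 hz, ?_⟩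
    simpa using Int.fract_add_intCast (t i) (2 * z i)

end PeriodicTiling

/-- A coordinate `x ∈ [0,2)` is coded by the position of `Int.fract x` in `S` together with
the bit `1 ≤ x`, so that `x` and `x + 1` receive codes differing by exactly `s`. -/
lemma exists_kellerCode {s : ℕ} (hs : 0 < s) {S : Finset ℝ} (hS : S.card ≤ s) :
    ∃ e : ℝ → Fin (2 * s), InjOn e {x | x ∈ Ico (0 : ℝ) 2 ∧ Int.fract x ∈ S} ∧
      ∀ x ∈ Ico (0 : ℝ) 1, (e x : ℕ) + s = e (x + 1) := by
  classical
  let c : ℝ → Fin s := fun x =>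
    if h : x ∈ S then Fin.castLE hS (S.equivFin ⟨x, h⟩) else ⟨0, hs⟩
  have hc : InjOn c S := by
    intro x hx y hy hxy
    simp only [c, dif_pos (Finset.mem_coe.1 hx), dif_pos (Finset.mem_coe.1 hy)] at hxy
    exact congrArg Subtype.val (S.equivFin.injective (Fin.castLE_injective hS hxy))
  refine ⟨fun x => finProdFinEquiv (if 1 ≤ x then 1 else 0, c (Int.fract x)), ?_, ?_⟩
  · rintro x ⟨⟨hx0, hx2⟩, hxS⟩ y ⟨⟨hy0, hy2⟩, hyS⟩ hxy
    obtain ⟨hbit, hcode⟩ := Prod.mk_inj.1 (finProdFinEquiv.injective hxy)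
    obtain ⟨k, hk⟩ := Int.fract_eq_fract.1 (hc hxS hyS hcode)
    have hlt : |(k : ℝ)| < 1 := by
      rw [← hk]
      split_ifs at hbit <;> first
        | exact absurd hbit (by decide)
        | exact abs_sub_lt_iff.2 ⟨by linarith, by linarith⟩
    have : k = 0 := Int.abs_lt_one_iff.1 (by exact_mod_cast hlt)
    subst this
    simpa [sub_eq_zero] using hk
  · rintro x ⟨hx0, hx1⟩
    simp [Int.fract_add_one, hx0, hx1.not_ge]

lemma exists_isNClique_kellerGraph {d s : ℕ} (hs : 0 < s) {T : Set (Fin d → ℝ)}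
    (hT : IsTiling d T) (hFF : FaceshareFree d T) (hP : PeriodicTiling d T)
    (hD : SDiscrete d s T) :
    ∃ K : Finset (Fin d → Fin (2 * s)), (kellerGraph d s).IsNClique (2 ^ d) K := by
  classical
  choose S hScard hS using hD
  choose e he hshift using fun i => exists_kellerCode hs (hScard i)
  have hR := hP.finite_baseCorners hT
  let enc : (Fin d → ℝ) → Fin d → Fin (2 * s) := fun t i => e i (t i)
  have hcoord {t t'} (ht : t ∈ baseCorners d T) (ht' : t' ∈ baseCorners d T) (i : Fin d)
      (h : enc t i = enc t' i) : t i = t' i :=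
    he i ⟨ht.2 i, hS i t ht.1⟩ ⟨ht'.2 i, hS i t' ht'.1⟩ h
  have hinj : InjOn enc (baseCorners d T) := fun t ht t' ht' h =>
    funext fun i => hcoord ht ht' i (congrFun h i)
  refine ⟨hR.toFinset.image enc, (kellerGraph d s).isNClique_iff.2 ⟨?_, ?_⟩⟩
  · rw [Finset.coe_image, hR.coe_toFinset, SimpleGraph.IsClique, hinj.pairwise_image]
    intro t ht t' ht' hne
    refine ⟨?_, ?_⟩
    · obtain ⟨i, h | h⟩ := hP.exists_eq_add_one_of_mem_baseCorners hT ht ht' hne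
      · refine ⟨i, Or.inl ?_⟩
        simpa [enc, h] using hshift i (t i) ⟨(ht.2 i).1, by linarith [(ht'.2 i).2]⟩
      · refine ⟨i, Or.inr ?_⟩
        simpa [enc, h] using hshift i (t' i) ⟨(ht'.2 i).1, by linarith [(ht.2 i).2]⟩
    · obtain ⟨i, j, hij, hi, hj⟩ := hP.exists_two_ne_of_mem_baseCorners hT hFF ht ht' hne
      exact ⟨i, j, hij, mt (hcoord ht ht' i) hi, mt (hcoord ht ht' j) hj⟩
  · rw [Finset.card_image_of_injOn (by simpa using hinj), ← ncard_eq_toFinset_card _ hR,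
      hP.ncard_baseCorners hT]

lemma natCast_div_eq_div_add_one {s a b : ℕ} (hs : 0 < s) (h : a + s = b) :
    (b : ℝ) / s = a / s + 1 := by
  subst h
  have : (s : ℝ) ≠ 0 := by positivity
  push_cast
  field_simp

lemma eq_of_div_add_two_mul_eq {s a b : ℕ} {m n : ℤ} (hs : 0 < s) (ha : a < 2 * s)
    (hb : b < 2 * s) (h : (a : ℝ) / s + 2 * m = b / s + 2 * n) : a = b := by
  have hs' : (s : ℝ) ≠ 0 := by positivity
  have hR : (a : ℝ) - b = 2 * s * (n - m) := by
    field_simp at h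
    linarith
  have hZ : (a : ℤ) - b = 2 * s * (n - m) := by exact_mod_cast hR
  obtain hlt | heq | hgt := lt_trichotomy (n - m) 0
  · nlinarith
  · rw [heq, mul_zero] at hZ
    omega
  · nlinarith

def kellerTiling {d : ℕ} (s : ℕ) (K : Finset (Fin d → Fin (2 * s))) : Set (Fin d → ℝ) :=
  {t | ∃ v ∈ K, ∃ z : Fin d → ℤ, t = fun i => (v i : ℕ) / (s : ℝ) + 2 * (z i : ℝ)}

section KellerTiling

variable {d s : ℕ} {K : Finset (Fin d → Fin (2 * s))}

lemma periodicTiling_kellerTiling : PeriodicTiling d (kellerTiling s K) := by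
  rintro _ ⟨v, hv, z, rfl⟩ z'
  refine ⟨v, hv, z + z', funext fun i => ?_⟩
  push_cast [Pi.add_apply]
  ring

lemma pairwise_disjoint_kellerTiling (hs : 0 < s) (hK : (kellerGraph d s).IsClique (K : Set _)) :
    (kellerTiling s K).Pairwise fun t t' => Disjoint (cube d t) (cube d t') := by
  rintro _ ⟨v, hv, z, rfl⟩ _ ⟨w, hw, z', rfl⟩ hne
  by_cases hvw : v = w
  · subst hvw
    obtain ⟨i, hi⟩ : ∃ i, z i ≠ z' i := Function.ne_iff.1 fun h => hne (by rw [h])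
    exact disjoint_cube_of_sub_eq_intCast i (k := 2 * (z i - z' i)) (by omega)
      (by push_cast; ring)
  · obtain ⟨⟨i, h | h⟩, -⟩ := hK hv hw hvw
    · exact disjoint_cube_of_sub_eq_intCast i (k := 2 * (z i - z' i) - 1) (by omega)
        (by rw [natCast_div_eq_div_add_one hs h]; push_cast; ring)
    · exact disjoint_cube_of_sub_eq_intCast i (k := 2 * (z i - z' i) + 1) (by omega)
        (by rw [natCast_div_eq_div_add_one hs h]; push_cast; ring)

/-- The point `y` lies in a cube of corner `v / s + 2z` iff every `⌊y i - v i / s⌋` is even;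
adjacent vertices of the clique have different parity patterns, and there are `2 ^ d` of both. -/
lemma exists_mem_kellerTiling_mem_cube (hs : 0 < s) (hK : (kellerGraph d s).IsNClique (2 ^ d) K)
    (y : Fin d → ℝ) : ∃ t ∈ kellerTiling s K, y ∈ cube d t := by
  classical
  let parity : (Fin d → Fin (2 * s)) → Fin d → Bool := fun v i =>
    decide (Even ⌊y i - (v i : ℕ) / (s : ℝ)⌋)
  have hinj : InjOn parity K := by
    intro v hv w hw h
    by_contra hvw
    obtain ⟨⟨i, hi | hi⟩, -⟩ := hK.1 hv hw hvw <;>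
    · have := congrFun h i
      simp [parity, natCast_div_eq_div_add_one hs hi, ← sub_sub, ← Int.not_even_iff_odd] at this
  obtain ⟨v, hv, hpar⟩ := Finset.surjOn_of_injOn_of_card_le parity
    (fun _ _ => Finset.mem_coe.2 (Finset.mem_univ _)) hinj (by simp [hK.2])
    (Finset.mem_coe.2 (Finset.mem_univ fun _ => true))
  have heven (i : Fin d) : Even ⌊y i - (v i : ℕ) / (s : ℝ)⌋ := by
    simpa [parity] using congrFun hpar i
  choose z hz using heven
  refine ⟨_, ⟨v, hv, z, rfl⟩, fun i => ⟨?_, ?_⟩⟩ <;>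
  · have h1 := Int.floor_le (y i - (v i : ℕ) / (s : ℝ))
    have h2 := Int.lt_floor_add_one (y i - (v i : ℕ) / (s : ℝ))
    rw [hz i] at h1 h2
    push_cast at h1 h2
    linarith

lemma faceshareFree_kellerTiling (hs : 0 < s) (hK : (kellerGraph d s).IsClique (K : Set _)) :
    FaceshareFree d (kellerTiling s K) := by
  rintro _ ⟨v, hv, z, rfl⟩ _ ⟨w, hw, z', rfl⟩ - ⟨i, hface⟩
  have hoff (j : Fin d) (hj : j ≠ i) : v j = w j := by
    refine Fin.ext (eq_of_div_add_two_mul_eq hs (v j).2 (w j).2 (m := z j) (n := z' j) ?_)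
    rcases hface with h | h <;> simpa [stdBasis, hj] using (congrFun h j).symm
  have hvi : v i ≠ w i := by
    intro heq
    have hodd : ((2 * (z' i - z i) : ℤ) : ℝ) = 1 ∨ ((2 * (z' i - z i) : ℤ) : ℝ) = -1 := by
      rcases hface with h | h <;> [left; right] <;>
      · have := congrFun h i
        simp only [stdBasis, heq, Pi.add_apply, Pi.sub_apply, if_true] at this
        push_cast
        linarith
    have : 2 * (z' i - z i) = 1 ∨ 2 * (z' i - z i) = -1 := by exact_mod_cast hodd
    omega
  obtain ⟨-, j, k, hjk, hj, hk⟩ := hK hv hw fun h => hvi (congrFun h i)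
  have hdiff (j : Fin d) (h : v j ≠ w j) : j = i := by_contra fun hji => h (hoff j hji)
  exact hjk ((hdiff j hj).trans (hdiff k hk).symm)

lemma isTiling_kellerTiling (hs : 0 < s) (hK : (kellerGraph d s).IsNClique (2 ^ d) K) :
    IsTiling d (kellerTiling s K) :=
  ⟨pairwise_disjoint_kellerTiling hs hK.1,
    eq_univ_of_forall fun y => by simpa using exists_mem_kellerTiling_mem_cube hs hK y⟩

end KellerTiling

theorem periodic_tiling_iff_keller_clique_general (d : ℕ) :
    (∃ T : Set (Fin d → ℝ), IsTiling d T ∧ FaceshareFree d T ∧ PeriodicTiling d T) ↔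
    (∃ K : Finset (Fin d → Fin (2 * 2 ^ (d - 1))),
      (kellerGraph d (2 ^ (d - 1))).IsNClique (2 ^ d) K) := by
  have hs : 0 < 2 ^ (d - 1) := by positivity
  constructor
  · rintro ⟨T, hT, hFF, hP⟩
    exact exists_isNClique_kellerGraph hs hT hFF hP (hP.sDiscrete hT)
  · rintro ⟨K, hK⟩
    exact ⟨kellerTiling _ K, isTiling_kellerTiling hs hK, faceshareFree_kellerTiling hs hK.1,
      periodicTiling_kellerTiling⟩

/-- For `d ≥ 1`, `ℝ^d` admits a faceshare-free periodic cube tiling iff the Keller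
graph `G_{d,s}` with `s = 2^(d-1)` contains a clique of size `2^d`. -/
theorem periodic_tiling_iff_keller_clique (d : ℕ) (hd : 1 ≤ d) :
    (∃ T : Set (Fin d → ℝ), IsTiling d T ∧ FaceshareFree d T ∧ PeriodicTiling d T) ↔
    (∃ K : Finset (Fin d → Fin (2 * 2 ^ (d - 1))),
      (kellerGraph d (2 ^ (d - 1))).IsNClique (2 ^ d) K) :=
  periodic_tiling_iff_keller_clique_general d
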